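/- Let T be a tree satisfying Σ_{uv ∈ E(T)}(d_u + d_v) = 4|E(T)|. Then for every s ≥ 1 the s-th subdivision tree T_s has assortativity coefficient r = 0 (equivalently, 4|E_s| · Σ_{ij ∈ E_s} d_i d_j = (Σ_{ij ∈ E_s}(d_i + d_j))²). -/

import Mathlib

open Finset

attribute [local instance] Classical.propDecidable

namespace Neutral

/-- Number of edges of `G`. -/
noncomputable def m {V : Type*} [Fintype V] (G : SimpleGraph V) : ℕ :=
  G.edgeFinset.card

/-- `∑_{uv ∈ E} d_u · d_v`, each edge counted once. -/
noncomputable def dd {V : Type*} [Fintype V] (G : SimpleGraph V) : ℕ :=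
  ∑ e ∈ G.edgeFinset,
    Sym2.lift ⟨fun u v => G.degree u * G.degree v, fun _ _ => Nat.mul_comm _ _⟩ e

/-- `∑_{uv ∈ E} (d_u + d_v)`, each edge counted once. -/
noncomputable def ds {V : Type*} [Fintype V] (G : SimpleGraph V) : ℕ :=
  ∑ e ∈ G.edgeFinset,
    Sym2.lift ⟨fun u v => G.degree u + G.degree v, fun _ _ => Nat.add_comm _ _⟩ e

/-- `∑_{uv ∈ E} (d_u² + d_v²)`, each edge counted once. -/
noncomputable def dsq {V : Type*} [Fintype V] (G : SimpleGraph V) : ℕ :=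
  ∑ e ∈ G.edgeFinset,
    Sym2.lift ⟨fun u v => G.degree u ^ 2 + G.degree v ^ 2, fun _ _ => Nat.add_comm _ _⟩ e

/-- A graph is irregular if it is not regular of any degree. -/
def Irregular {V : Type*} [Fintype V] (G : SimpleGraph V) : Prop :=
  ¬ ∃ k, G.IsRegularOfDegree k

end Neutral

open Neutral

namespace Neutral

/-- A chosen pair of endpoints of an unordered edge. -/
noncomputable def ends {V : Type*} (e : Sym2 V) : V × V :=
  Classical.choose (Quot.exists_rep e)

/-- One-directional adjacency used to build the `s`-th subdivision graph:
the new vertices `(e,0), …, (e,s-1)` inserted on the edge `e` form a path joining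
the two endpoints of `e`. -/
def subS {V : Type*} (G : SimpleGraph V) (s : ℕ) :
    (V ⊕ (G.edgeSet × Fin s)) → (V ⊕ (G.edgeSet × Fin s)) → Prop
  | Sum.inl u, Sum.inr (e, i) =>
      (i.val = 0 ∧ u = (ends (e : Sym2 V)).1) ∨ (i.val = s - 1 ∧ u = (ends (e : Sym2 V)).2)
  | Sum.inr (e, i), Sum.inr (f, j) => e = f ∧ i.val + 1 = j.val
  | _, _ => False

/-- The `s`-th subdivision graph `G_s`: every edge of `G` is subdivided by `s` new
vertices. -/
noncomputable def Subdiv {V : Type*} (G : SimpleGraph V) (s : ℕ) :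
    SimpleGraph (V ⊕ (G.edgeSet × Fin s)) where
  Adj x y := x ≠ y ∧ (subS G s x y ∨ subS G s y x)
  symm := ⟨fun _ _ h => ⟨Ne.symm h.1, h.2.symm⟩⟩
  loopless := ⟨fun _ h => h.1 rfl⟩

end Neutral

/-!
Write `ds G = ∑_v d_v²` and `4 m G = 2 ∑_v d_v`, so the hypothesis says `∑_v d_v (d_v - 2) = 0`.
Subdividing keeps the old degrees and only adds vertices of degree 2, so `T_s` satisfies the
hypothesis again. Moreover every edge of `T_s` has an endpoint of degree 2, and for such an edge
`d_x d_y = 2 (d_x + d_y) - 4`; summing, `dd T_s = 2 ds T_s - 4 m T_s = 4 m T_s`, which makes the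
numerator `4 m · dd - ds²` vanish.
-/

namespace Neutral
open SimpleGraph Sum

section
variable {V : Type*} [Fintype V] (G : SimpleGraph V)

lemma sum_edgeFinset_lift_add_eq_sum_degree_mul (f : V → ℕ) :
    ∑ e ∈ G.edgeFinset, Sym2.lift ⟨fun u v => f u + f v, fun _ _ => Nat.add_comm _ _⟩ e
      = ∑ v, G.degree v * f v := by
  have hpair : ∀ e ∈ G.edgeFinset,
      Sym2.lift ⟨fun u v => f u + f v, fun _ _ => Nat.add_comm _ _⟩ e
        = ∑ v ∈ univ.filter (· ∈ e), f v := by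
    intro e he
    induction e using Sym2.ind with
    | _ x y =>
      have hxy : x ≠ y := (G.mem_edgeFinset.mp he).ne
      rw [Sym2.lift_mk, show univ.filter (· ∈ s(x, y)) = {x, y} by ext; simp,
        Finset.sum_pair hxy]
  rw [Finset.sum_congr rfl hpair,
    Finset.sum_comm' (t' := univ) (s' := fun v => G.incidenceFinset v)]
  · simp only [Finset.sum_const, smul_eq_mul, card_incidenceFinset_eq_degree]
  · intro e v
    simp [mem_incidenceFinset, incidenceSet, and_comm]

lemma ds_eq_sum_degree_mul_self : ds G = ∑ v, G.degree v * G.degree v :=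
  sum_edgeFinset_lift_add_eq_sum_degree_mul G (G.degree ·)

lemma dd_add_four_mul_m_eq_two_mul_ds
    (h2 : ∀ x y, G.Adj x y → G.degree x = 2 ∨ G.degree y = 2) :
    dd G + 4 * m G = 2 * ds G := by
  rw [dd, ds, m, Finset.card_eq_sum_ones, Finset.mul_sum, Finset.mul_sum,
    ← Finset.sum_add_distrib]
  refine Finset.sum_congr rfl fun e he => ?_
  induction e using Sym2.ind with
  | _ x y =>
    rcases h2 x y (G.mem_edgeFinset.mp he) with h | h <;>
      simp only [Sym2.lift_mk, h] <;> ring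

lemma four_mul_m_mul_dd_eq_ds_sq
    (h2 : ∀ x y, G.Adj x y → G.degree x = 2 ∨ G.degree y = 2) (h : ds G = 4 * m G) :
    4 * m G * dd G = ds G ^ 2 := by
  have hdd : dd G = 4 * m G := by
    have := dd_add_four_mul_m_eq_two_mul_ds G h2
    omega
  rw [hdd, h]
  ring

end

lemma ends_spec {V : Type*} (e : Sym2 V) : s((ends e).1, (ends e).2) = e :=
  Classical.choose_spec (Quot.exists_rep e)

section
variable {V : Type*} {G : SimpleGraph V} {s : ℕ}

lemma ends_ne (e : G.edgeSet) : (ends e.1).1 ≠ (ends e.1).2 :=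
  (G.mem_edgeSet.mp ((ends_spec e.1).symm ▸ e.2)).ne

lemma subdiv_not_adj_inl_inl (u v : V) : ¬ (Subdiv G s).Adj (inl u) (inl v) := by
  rintro ⟨-, h | h⟩ <;> exact h

lemma subdiv_adj_inl_inr_iff (u : V) (e : G.edgeSet) (i : Fin s) :
    (Subdiv G s).Adj (inl u) (inr (e, i)) ↔
      (i.val = 0 ∧ u = (ends e.1).1) ∨ (i.val = s - 1 ∧ u = (ends e.1).2) := by
  simp [Subdiv, subS]

lemma subdiv_adj_inr_inr_iff (e f : G.edgeSet) (i j : Fin s) :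
    (Subdiv G s).Adj (inr (e, i)) (inr (f, j)) ↔
      e = f ∧ (i.val + 1 = j.val ∨ j.val + 1 = i.val) := by
  simp only [Subdiv, subS]
  grind [Fin.ext_iff]

variable [Fintype V]

lemma subdiv_degree_inr (e : G.edgeSet) (i : Fin s) :
    (Subdiv G s).degree (inr (e, i)) = 2 := by
  let prev : V ⊕ (G.edgeSet × Fin s) :=
    if h : i.val = 0 then inl (ends e.1).1 else inr (e, ⟨i.val - 1, by omega⟩)
  let next : V ⊕ (G.edgeSet × Fin s) :=
    if h : i.val + 1 = s then inl (ends e.1).2 else inr (e, ⟨i.val + 1, by omega⟩)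
  have hne : prev ≠ next := by
    have := ends_ne e
    simp only [prev, next]
    split_ifs <;> simp [Fin.ext_iff]
    omega
  have hnbrs : (Subdiv G s).neighborFinset (inr (e, i)) = {prev, next} := by
    ext y
    rw [mem_neighborFinset, Finset.mem_insert, Finset.mem_singleton]
    rcases y with u | ⟨f, j⟩
    · rw [adj_comm, subdiv_adj_inl_inr_iff]
      simp only [prev, next]
      split_ifs <;> simp <;> grind
    · rw [subdiv_adj_inr_inr_iff]
      simp only [prev, next]
      split_ifs <;> simp [Fin.ext_iff] <;> grind
  rw [degree, hnbrs, Finset.card_pair hne]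

lemma subdiv_degree_inl (hs : 1 ≤ s) (u : V) : (Subdiv G s).degree (inl u) = G.degree u := by
  rw [← (Subdiv G s).card_neighborFinset_eq_degree, ← G.card_incidenceFinset_eq_degree]
  refine Finset.card_nbij
    (Sum.elim (fun v => s(v, v)) (fun p : G.edgeSet × Fin s => (p.1 : Sym2 V))) ?_ ?_ ?_
  · rintro (v | ⟨e, i⟩) h <;> simp only [Finset.mem_coe, mem_neighborFinset] at h
    · exact absurd h (subdiv_not_adj_inl_inl u v)
    · rw [subdiv_adj_inl_inr_iff] at h
      rw [Finset.mem_coe, mem_incidenceFinset, Sum.elim_inr]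
      refine ⟨e.2, ?_⟩
      rw [← ends_spec e.1]
      rcases h with ⟨-, rfl⟩ | ⟨-, rfl⟩ <;> simp
  · rintro (v | ⟨e, i⟩) h (w | ⟨f, j⟩) h' heq
    all_goals simp only [Finset.mem_coe, mem_neighborFinset] at h h'
    · exact absurd h (subdiv_not_adj_inl_inl u v)
    · exact absurd h (subdiv_not_adj_inl_inl u v)
    · exact absurd h' (subdiv_not_adj_inl_inl u w)
    · simp only [Sum.elim_inr] at heq
      obtain rfl := Subtype.ext heq
      have := ends_ne e
      rw [subdiv_adj_inl_inr_iff] at h h'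
      simp only [inr.injEq, Prod.mk.injEq, true_and, Fin.ext_iff]
      grind
  · intro e he
    rw [Finset.mem_coe, mem_incidenceFinset] at he
    let e' : G.edgeSet := ⟨e, he.1⟩
    have hu : u = (ends e).1 ∨ u = (ends e).2 := by
      rw [← Sym2.mem_iff, ends_spec]; exact he.2
    rcases hu with hu | hu
    · refine ⟨inr (e', ⟨0, hs⟩), ?_, rfl⟩
      simp [subdiv_adj_inl_inr_iff, e', hu]
    · refine ⟨inr (e', ⟨s - 1, by omega⟩), ?_, rfl⟩
      simp [subdiv_adj_inl_inr_iff, e', hu]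

lemma subdiv_degree_eq_two_of_adj {x y : V ⊕ (G.edgeSet × Fin s)}
    (h : (Subdiv G s).Adj x y) : (Subdiv G s).degree x = 2 ∨ (Subdiv G s).degree y = 2 := by
  rcases x with u | ⟨e, i⟩
  · rcases y with v | ⟨f, j⟩
    · exact absurd h (subdiv_not_adj_inl_inl u v)
    · exact Or.inr (subdiv_degree_inr f j)
  · exact Or.inl (subdiv_degree_inr e i)

lemma sum_comp_degree_subdiv (hs : 1 ≤ s) (φ : ℕ → ℕ) :
    ∑ x, φ ((Subdiv G s).degree x) = ∑ v, φ (G.degree v) + s * m G * φ 2 := by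
  simp only [Fintype.sum_sum_type, Fintype.sum_prod_type, subdiv_degree_inl hs,
    subdiv_degree_inr, Finset.sum_const, Finset.card_univ, Fintype.card_fin, m, edgeFinset_card,
    smul_eq_mul]
  ring

lemma ds_subdiv (hs : 1 ≤ s) : ds (Subdiv G s) = ds G + 4 * (s * m G) := by
  rw [ds_eq_sum_degree_mul_self, ds_eq_sum_degree_mul_self,
    sum_comp_degree_subdiv hs (fun d => d * d)]
  ring

lemma m_subdiv (hs : 1 ≤ s) : m (Subdiv G s) = m G + s * m G := by
  have h := sum_comp_degree_subdiv (G := G) hs id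
  simp only [id, sum_degrees_eq_twice_card_edges, m] at h ⊢
  omega

end

end Neutral

theorem stmt_4 {V : Type*} [Fintype V] (T : SimpleGraph V)
    (h : ds T = 4 * m T) (s : ℕ) (hs : 1 ≤ s) :
    4 * m (Subdiv T s) * dd (Subdiv T s) = (ds (Subdiv T s)) ^ 2 := by
  refine four_mul_m_mul_dd_eq_ds_sq _ (fun _ _ => subdiv_degree_eq_two_of_adj) ?_
  rw [ds_subdiv hs, m_subdiv hs, h]
  ring
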